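/- For every odd integer m ≥ 1, the polynomial He_m(x)³ has Hermite rank 1; precisely, ∫ He_m(x)³ · x dγ(x) > 0. -/

import Mathlib

/-!
Gaussian integration by parts, `E[X P(X)] = E[P'(X)]`, combined with `He_n' = n He_{n-1}` and
`He_{n+1} = X He_n - He_n'`, gives the recurrence `T(a+1,b,c) = b T(a,b-1,c) + c T(a,b,c-1)` for
the triple moments `T(a,b,c) = E[He_a He_b He_c]`, with `T(a,0,c) = a! δ_{ac}`. By induction
`T ≥ 0`, and `T > 0` whenever `a, b, c` satisfy the triangle inequalities and `a + b + c` is even.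
Finally `∫ He_m³ x dγ = E[(He_m³)'] = 3m T(m,m,m-1)`, and for odd `m` the triple `(m,m,m-1)` is
admissible.
-/

open Polynomial MeasureTheory ProbabilityTheory

/-- The `n`-th probabilists' Hermite polynomial, with real coefficients. -/
noncomputable def hermiteR (n : ℕ) : Polynomial ℝ :=
  (Polynomial.hermite n).map (Int.castRingHom ℝ)

/-- The standard Gaussian measure `N(0,1)` on `ℝ`. -/
noncomputable def stdGaussian : Measure ℝ := gaussianReal 0 1

/-- `F` has Hermite rank `m`: `m ≥ 1` is the smallest integer `k ≥ 1` such that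
`∫ F(x) He_k(x) dγ(x) ≠ 0`, where `γ` is the standard Gaussian measure. -/
def HasHermiteRank (F : Polynomial ℝ) (m : ℕ) : Prop :=
  1 ≤ m ∧ (∫ x, F.eval x * (hermiteR m).eval x ∂stdGaussian) ≠ 0 ∧
    ∀ k, 1 ≤ k → k < m → (∫ x, F.eval x * (hermiteR k).eval x ∂stdGaussian) = 0

open scoped NNReal

namespace ProbabilityTheory

lemma hasDerivAt_gaussianPDFReal (μ : ℝ) (v : ℝ≥0) (x : ℝ) :
    HasDerivAt (gaussianPDFReal μ v) (-(x - μ) / v * gaussianPDFReal μ v x) x := by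
  have hexponent : HasDerivAt (fun y ↦ -(y - μ) ^ 2 / (2 * v)) (-(x - μ) / v) x := by
    refine ((((hasDerivAt_id' x).sub_const μ).fun_pow 2).fun_neg.div_const
      (2 * (v : ℝ))).congr_deriv ?_
    ring
  rw [gaussianPDFReal_def]
  exact (hexponent.exp.const_mul (√(2 * Real.pi * v))⁻¹).congr_deriv (by ring)

variable {μ : ℝ} {v : ℝ≥0}

lemma integrable_eval_gaussianReal (P : ℝ[X]) :
    Integrable (fun x ↦ P.eval x) (gaussianReal μ v) := by
  induction P using Polynomial.induction_on' with
  | add p q hp hq => simpa only [eval_add] using hp.fun_add hq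
  | monomial n c =>
    have hpow : Integrable (fun x : ℝ ↦ x ^ n) (gaussianReal μ v) :=
      (memLp_id_gaussianReal n).integrable_norm_pow'.mono' (by fun_prop)
        (ae_of_all _ fun x ↦ by simp)
    simpa only [eval_monomial] using hpow.const_mul c

lemma integrable_gaussianPDFReal_mul_eval (hv : v ≠ 0) (P : ℝ[X]) :
    Integrable (fun x ↦ gaussianPDFReal μ v x * P.eval x) := by
  have h := integrable_eval_gaussianReal (μ := μ) (v := v) P
  rw [gaussianReal_of_var_ne_zero _ hv, integrable_withDensity_iff_integrable_smul'
    (measurable_gaussianPDF _ _) (ae_of_all _ fun _ ↦ gaussianPDF_lt_top)] at h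
  simpa only [toReal_gaussianPDF, smul_eq_mul] using h

noncomputable def gaussianPolyExpectation (μ : ℝ) (v : ℝ≥0) : ℝ[X] →ₗ[ℝ] ℝ where
  toFun P := ∫ x, P.eval x ∂gaussianReal μ v
  map_add' P Q := by
    simp only [eval_add]
    exact integral_add (integrable_eval_gaussianReal P) (integrable_eval_gaussianReal Q)
  map_smul' c P := by simp only [eval_smul, smul_eq_mul, integral_const_mul, RingHom.id_apply]

lemma gaussianPolyExpectation_apply (P : ℝ[X]) :
    gaussianPolyExpectation μ v P = ∫ x, P.eval x ∂gaussianReal μ v := rfl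

theorem gaussianPolyExpectation_X_sub_C_mul (P : ℝ[X]) :
    gaussianPolyExpectation μ v ((X - C μ) * P) =
      v * gaussianPolyExpectation μ v (derivative P) := by
  rcases eq_or_ne v 0 with rfl | hv
  · simp [gaussianPolyExpectation_apply, gaussianReal_zero_var]
  have hderiv (x : ℝ) : HasDerivAt (fun y ↦ gaussianPDFReal μ v y * P.eval y)
      (gaussianPDFReal μ v x * (derivative P - C (v : ℝ)⁻¹ * ((X - C μ) * P)).eval x) x := by
    refine ((hasDerivAt_gaussianPDFReal μ v x).mul (P.hasDerivAt x)).congr_deriv ?_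
    simp only [eval_sub, eval_mul, eval_C, eval_X]
    ring
  have hzero : gaussianPolyExpectation μ v (derivative P - C (v : ℝ)⁻¹ * ((X - C μ) * P)) = 0 := by
    rw [gaussianPolyExpectation_apply, integral_gaussianReal_eq_integral_smul hv]
    exact integral_eq_zero_of_hasDerivAt_of_integrable hderiv
      (integrable_gaussianPDFReal_mul_eval hv _) (integrable_gaussianPDFReal_mul_eval hv P)
  rw [map_sub, ← smul_eq_C_mul, map_smul, smul_eq_mul, sub_eq_zero] at hzero
  rw [hzero, mul_inv_cancel_left₀ (NNReal.coe_ne_zero.mpr hv)]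

end ProbabilityTheory

open Nat

lemma hermiteR_zero : hermiteR 0 = 1 := by simp [hermiteR]

lemma hermiteR_one : hermiteR 1 = X := by simp [hermiteR]

lemma hermiteR_succ (n : ℕ) :
    hermiteR (n + 1) = X * hermiteR n - derivative (hermiteR n) := by
  simp [hermiteR, hermite_succ, derivative_map]

-- At `n = 0` the truncated index `n - 1` is harmless: its coefficient is `0`.
lemma derivative_hermiteR (n : ℕ) :
    derivative (hermiteR n) = C (n : ℝ) * hermiteR (n - 1) := by
  induction n with
  | zero => simp [hermiteR_zero]
  | succ n ih =>
    rcases n with _ | n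
    · simp [hermiteR_one, hermiteR_zero]
    · rw [hermiteR_succ (n + 1), derivative_sub, derivative_mul, derivative_X, ih,
        derivative_mul, derivative_C]
      simp only [add_tsub_cancel_right]
      rw [hermiteR_succ n]
      simp only [Nat.cast_add, Nat.cast_one, C_add, C_1]
      ring

lemma gaussianPolyExpectation_X_mul (P : ℝ[X]) :
    gaussianPolyExpectation 0 1 (X * P) = gaussianPolyExpectation 0 1 (derivative P) := by
  simpa using gaussianPolyExpectation_X_sub_C_mul (μ := 0) (v := 1) P

lemma gaussianPolyExpectation_hermiteR (n : ℕ) :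
    gaussianPolyExpectation 0 1 (hermiteR n) = if n = 0 then 1 else 0 := by
  rcases n with _ | n
  · simp [hermiteR_zero, gaussianPolyExpectation_apply]
  · rw [hermiteR_succ, map_sub, gaussianPolyExpectation_X_mul, sub_self, if_neg n.succ_ne_zero]

noncomputable def hermiteTriple (a b c : ℕ) : ℝ :=
  gaussianPolyExpectation 0 1 (hermiteR a * hermiteR b * hermiteR c)

lemma hermiteTriple_comm_left (a b c : ℕ) : hermiteTriple a b c = hermiteTriple b a c := by
  rw [hermiteTriple, hermiteTriple, mul_comm (hermiteR a)]

lemma hermiteTriple_succ_left (a b c : ℕ) :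
    hermiteTriple (a + 1) b c = b * hermiteTriple a (b - 1) c + c * hermiteTriple a b (c - 1) := by
  have hsplit : hermiteR (a + 1) * hermiteR b * hermiteR c =
      X * (hermiteR a * hermiteR b * hermiteR c) -
        (a : ℝ) • (hermiteR (a - 1) * hermiteR b * hermiteR c) := by
    rw [hermiteR_succ, derivative_hermiteR, smul_eq_C_mul]
    ring
  have hderiv : derivative (hermiteR a * hermiteR b * hermiteR c) =
      (a : ℝ) • (hermiteR (a - 1) * hermiteR b * hermiteR c) +
        (b : ℝ) • (hermiteR a * hermiteR (b - 1) * hermiteR c) +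
          (c : ℝ) • (hermiteR a * hermiteR b * hermiteR (c - 1)) := by
    simp only [derivative_mul, derivative_hermiteR, smul_eq_C_mul]
    ring
  simp only [hermiteTriple, hsplit, map_sub, gaussianPolyExpectation_X_mul, hderiv, map_add,
    map_smul, smul_eq_mul]
  ring

lemma hermiteTriple_zero_middle (a c : ℕ) :
    hermiteTriple a 0 c = if a = c then (a ! : ℝ) else 0 := by
  induction a generalizing c with
  | zero =>
    simp only [hermiteTriple, hermiteR_zero, one_mul, gaussianPolyExpectation_hermiteR]
    simp [eq_comm]
  | succ a ih =>
    rw [hermiteTriple_succ_left]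
    rcases c with _ | c
    · simp
    · simp only [CharP.cast_eq_zero, zero_mul, zero_add, add_tsub_cancel_right, ih,
        add_left_inj, factorial_succ]
      split_ifs <;> simp_all

lemma hermiteTriple_nonneg (a b c : ℕ) : 0 ≤ hermiteTriple a b c := by
  induction a generalizing b c with
  | zero =>
    rw [hermiteTriple_comm_left, hermiteTriple_zero_middle]
    positivity
  | succ a ih =>
    rw [hermiteTriple_succ_left]
    have hlower_b := ih (b - 1) c
    have hlower_c := ih b (c - 1)
    positivity

lemma hermiteTriple_pos {a b c : ℕ} (hab : a ≤ b + c) (hbc : b ≤ a + c) (hca : c ≤ a + b)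
    (heven : Even (a + b + c)) : 0 < hermiteTriple a b c := by
  induction a generalizing b c with
  | zero =>
    obtain rfl : b = c := by omega
    rw [hermiteTriple_comm_left, hermiteTriple_zero_middle, if_pos rfl]
    positivity
  | succ a ih =>
    rw [hermiteTriple_succ_left]
    rw [Nat.even_iff] at heven
    have hnonneg_b := hermiteTriple_nonneg a (b - 1) c
    have hnonneg_c := hermiteTriple_nonneg a b (c - 1)
    -- At least one of the two lowered triples is again admissible.
    by_cases hlower : 1 ≤ b ∧ c + 1 ≤ a + b
    · have hpos : 0 < hermiteTriple a (b - 1) c :=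
        ih (by omega) (by omega) (by omega) (by rw [Nat.even_iff]; omega)
      have hb0 : (0 : ℝ) < b := by exact_mod_cast hlower.1
      positivity
    · have hpos : 0 < hermiteTriple a b (c - 1) :=
        ih (by omega) (by omega) (by omega) (by rw [Nat.even_iff]; omega)
      have hc0 : (0 : ℝ) < c := by exact_mod_cast (by omega : 1 ≤ c)
      positivity

lemma integral_hermiteR_pow_three_mul_id (m : ℕ) :
    ∫ x, ((hermiteR m).eval x) ^ 3 * x ∂stdGaussian = 3 * m * hermiteTriple m m (m - 1) := by
  have hderiv : derivative (hermiteR m ^ 3) =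
      ((3 : ℝ) * m) • (hermiteR m * hermiteR m * hermiteR (m - 1)) := by
    rw [derivative_pow, derivative_hermiteR, smul_eq_C_mul, C_mul]
    simp only [Nat.cast_ofNat]
    ring
  calc ∫ x, ((hermiteR m).eval x) ^ 3 * x ∂stdGaussian
      = gaussianPolyExpectation 0 1 (X * hermiteR m ^ 3) := by
        simp only [gaussianPolyExpectation_apply, _root_.stdGaussian, eval_mul, eval_pow, eval_X,
          mul_comm]
    _ = 3 * m * hermiteTriple m m (m - 1) := by
        rw [gaussianPolyExpectation_X_mul, hderiv, map_smul, smul_eq_mul, hermiteTriple]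

theorem hermite_cube_rank_one_general (m : ℕ) (hmo : Odd m) :
    HasHermiteRank ((hermiteR m) ^ 3) 1 ∧
    0 < ∫ x, ((hermiteR m).eval x) ^ 3 * x ∂stdGaussian := by
  obtain ⟨k, rfl⟩ := hmo
  have htriple : 0 < hermiteTriple (2 * k + 1) (2 * k + 1) (2 * k + 1 - 1) :=
    hermiteTriple_pos (by omega) (by omega) (by omega) ⟨3 * k + 1, by omega⟩
  have hpos : 0 < ∫ x, ((hermiteR (2 * k + 1)).eval x) ^ 3 * x ∂stdGaussian := by
    rw [integral_hermiteR_pow_three_mul_id]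
    positivity
  refine ⟨⟨le_rfl, ?_, fun j hj hj1 => by omega⟩, hpos⟩
  simpa [hermiteR_one] using hpos.ne'

/-- For every odd `m ≥ 1`, the polynomial `He_m(x)³` has Hermite rank `1`; precisely,
`∫ He_m(x)³ x dγ(x) > 0`. -/
theorem hermite_cube_rank_one (m : ℕ) (hm : 1 ≤ m) (hmo : Odd m) :
    HasHermiteRank ((hermiteR m) ^ 3) 1 ∧
    0 < ∫ x, ((hermiteR m).eval x) ^ 3 * x ∂stdGaussian :=
  hermite_cube_rank_one_general m hmo
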